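/- For integers n ≥ 3 and m ≥ 2, the F-index of the vertex S-join of the cycle C_n and the path P_m is F(C_n ∨̇_S P_m) = mn{(m² + n²) + 6(m + n)} − 6n² + 24mn + 8m − 2n − 14. -/

import Mathlib

/-- The subdivision graph `S(G)`: a new vertex is inserted into each edge of `G`
(each edge is replaced by a path of length 2). The inserted vertices form the
right summand `↥G.edgeSet`. -/
def Sgraph {V : Type*} (G : SimpleGraph V) : SimpleGraph (V ⊕ ↥G.edgeSet) where
  Adj x y :=
    match x, y with
    | Sum.inl v, Sum.inr e => v ∈ (e : Sym2 V)
    | Sum.inr e, Sum.inl v => v ∈ (e : Sym2 V)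
    | _, _ => False
  symm := by constructor; rintro (v | e) (w | f) h <;> exact h
  loopless := by constructor; rintro (v | e) h <;> exact h

/-- The graph `R(G)`: obtained from `G` by inserting a new vertex into each edge of `G`
and joining each new vertex to the end vertices of its corresponding edge. -/
def Rgraph {V : Type*} (G : SimpleGraph V) : SimpleGraph (V ⊕ ↥G.edgeSet) where
  Adj x y :=
    match x, y with
    | Sum.inl v, Sum.inl w => G.Adj v w
    | Sum.inl v, Sum.inr e => v ∈ (e : Sym2 V)
    | Sum.inr e, Sum.inl v => v ∈ (e : Sym2 V)
    | Sum.inr _, Sum.inr _ => False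
  symm := by
    constructor
    rintro (v | e) (w | f) h
    · exact G.adj_symm h
    · exact h
    · exact h
    · exact h
  loopless := by
    constructor
    rintro (v | e) h
    · exact G.irrefl h
    · exact h

/-- The graph `Q(G)`: obtained from `G` by inserting a new vertex into each edge of `G`,
then joining by edges those pairs of new vertices lying on adjacent edges of `G`. -/
def Qgraph {V : Type*} (G : SimpleGraph V) : SimpleGraph (V ⊕ ↥G.edgeSet) where
  Adj x y :=
    match x, y with
    | Sum.inl _, Sum.inl _ => False
    | Sum.inl v, Sum.inr e => v ∈ (e : Sym2 V)
    | Sum.inr e, Sum.inl v => v ∈ (e : Sym2 V)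
    | Sum.inr e, Sum.inr f => e ≠ f ∧ ∃ v, v ∈ (e : Sym2 V) ∧ v ∈ (f : Sym2 V)
  symm := by
    constructor
    rintro (v | e) (w | f) h
    · exact h
    · exact h
    · exact h
    · exact ⟨h.1.symm, by obtain ⟨v, h1, h2⟩ := h.2; exact ⟨v, h2, h1⟩⟩
  loopless := by
    constructor
    rintro (v | e) h
    · exact h
    · exact h.1 rfl

/-- The total graph `T(G)`: obtained from `G` by inserting a new vertex into each edge,
joining each new vertex to the end vertices of its corresponding edge, and joining by
edges those pairs of new vertices lying on adjacent edges of `G`. -/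
def Tgraph {V : Type*} (G : SimpleGraph V) : SimpleGraph (V ⊕ ↥G.edgeSet) where
  Adj x y :=
    match x, y with
    | Sum.inl v, Sum.inl w => G.Adj v w
    | Sum.inl v, Sum.inr e => v ∈ (e : Sym2 V)
    | Sum.inr e, Sum.inl v => v ∈ (e : Sym2 V)
    | Sum.inr e, Sum.inr f => e ≠ f ∧ ∃ v, v ∈ (e : Sym2 V) ∧ v ∈ (f : Sym2 V)
  symm := by
    constructor
    rintro (v | e) (w | f) h
    · exact G.adj_symm h
    · exact h
    · exact h
    · exact ⟨h.1.symm, by obtain ⟨v, h1, h2⟩ := h.2; exact ⟨v, h2, h1⟩⟩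
  loopless := by
    constructor
    rintro (v | e) h
    · exact G.irrefl h
    · exact h.1 rfl

/-- The disjoint union of `H` and `K` together with all edges joining a vertex `a` of `H`
with `P a` to every vertex of `K`. -/
def joinOn {A B : Type*} (H : SimpleGraph A) (K : SimpleGraph B) (P : A → Prop) :
    SimpleGraph (A ⊕ B) where
  Adj x y :=
    match x, y with
    | Sum.inl a, Sum.inl a' => H.Adj a a'
    | Sum.inr b, Sum.inr b' => K.Adj b b'
    | Sum.inl a, Sum.inr _ => P a
    | Sum.inr _, Sum.inl a => P a
  symm := by
    constructor
    rintro (a | b) (a' | b') h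
    · exact H.adj_symm h
    · exact h
    · exact h
    · exact K.adj_symm h
  loopless := by
    constructor
    rintro (a | b) h
    · exact H.irrefl h
    · exact K.irrefl h

/-- The vertex S-join `G₁ ∨̇_S G₂`: obtained from `S(G₁)` and `G₂` by joining each vertex
of `V(G₁)` to every vertex of `G₂`. -/
def vertexSJoin {V₁ V₂ : Type*} (G₁ : SimpleGraph V₁) (G₂ : SimpleGraph V₂) :
    SimpleGraph ((V₁ ⊕ ↥G₁.edgeSet) ⊕ V₂) :=
  joinOn (Sgraph G₁) G₂ (fun x => x.isLeft)

/-- The edge S-join `G₁ ∨̱_S G₂`: obtained from `S(G₁)` and `G₂` by joining each inserted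
vertex (each vertex of `I(G₁)`) to every vertex of `G₂`. -/
def edgeSJoin {V₁ V₂ : Type*} (G₁ : SimpleGraph V₁) (G₂ : SimpleGraph V₂) :
    SimpleGraph ((V₁ ⊕ ↥G₁.edgeSet) ⊕ V₂) :=
  joinOn (Sgraph G₁) G₂ (fun x => x.isRight)

/-- The vertex R-join `G₁ ∨̇_R G₂`. -/
def vertexRJoin {V₁ V₂ : Type*} (G₁ : SimpleGraph V₁) (G₂ : SimpleGraph V₂) :
    SimpleGraph ((V₁ ⊕ ↥G₁.edgeSet) ⊕ V₂) :=
  joinOn (Rgraph G₁) G₂ (fun x => x.isLeft)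

/-- The edge R-join `G₁ ∨̱_R G₂`. -/
def edgeRJoin {V₁ V₂ : Type*} (G₁ : SimpleGraph V₁) (G₂ : SimpleGraph V₂) :
    SimpleGraph ((V₁ ⊕ ↥G₁.edgeSet) ⊕ V₂) :=
  joinOn (Rgraph G₁) G₂ (fun x => x.isRight)

/-- The vertex Q-join `G₁ ∨̇_Q G₂`. -/
def vertexQJoin {V₁ V₂ : Type*} (G₁ : SimpleGraph V₁) (G₂ : SimpleGraph V₂) :
    SimpleGraph ((V₁ ⊕ ↥G₁.edgeSet) ⊕ V₂) :=
  joinOn (Qgraph G₁) G₂ (fun x => x.isLeft)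

/-- The edge Q-join `G₁ ∨̱_Q G₂`. -/
def edgeQJoin {V₁ V₂ : Type*} (G₁ : SimpleGraph V₁) (G₂ : SimpleGraph V₂) :
    SimpleGraph ((V₁ ⊕ ↥G₁.edgeSet) ⊕ V₂) :=
  joinOn (Qgraph G₁) G₂ (fun x => x.isRight)

/-- The vertex T-join `G₁ ∨̇_T G₂`. -/
def vertexTJoin {V₁ V₂ : Type*} (G₁ : SimpleGraph V₁) (G₂ : SimpleGraph V₂) :
    SimpleGraph ((V₁ ⊕ ↥G₁.edgeSet) ⊕ V₂) :=
  joinOn (Tgraph G₁) G₂ (fun x => x.isLeft)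

/-- The edge T-join `G₁ ∨̱_T G₂`. -/
def edgeTJoin {V₁ V₂ : Type*} (G₁ : SimpleGraph V₁) (G₂ : SimpleGraph V₂) :
    SimpleGraph ((V₁ ⊕ ↥G₁.edgeSet) ⊕ V₂) :=
  joinOn (Tgraph G₁) G₂ (fun x => x.isRight)

/-- Degree of a vertex in a graph on a finite vertex type. -/
noncomputable def gdeg {V : Type*} [Finite V] (G : SimpleGraph V) (v : V) : ℕ :=
  haveI : Fintype ↥(G.neighborSet v) := Fintype.ofFinite _
  G.degree v

/-- The forgotten topological index (F-index): `F(G) = ∑_{v ∈ V(G)} d_G(v)³`. -/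
noncomputable def Findex {V : Type*} [Finite V] (G : SimpleGraph V) : ℕ :=
  haveI := Fintype.ofFinite V
  ∑ v : V, gdeg G v ^ 3

/-- The first Zagreb index: `M₁(G) = ∑_{v ∈ V(G)} d_G(v)²`. -/
noncomputable def M1 {V : Type*} [Finite V] (G : SimpleGraph V) : ℕ :=
  haveI := Fintype.ofFinite V
  ∑ v : V, gdeg G v ^ 2

/-- `M₄(G) = ∑_{v ∈ V(G)} d_G(v)⁴`. -/
noncomputable def M4 {V : Type*} [Finite V] (G : SimpleGraph V) : ℕ :=
  haveI := Fintype.ofFinite V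
  ∑ v : V, gdeg G v ^ 4

/-- The hyper Zagreb index: `HM(G) = ∑_{uv ∈ E(G)} (d_G(u) + d_G(v))²`. -/
noncomputable def HM {V : Type*} [Finite V] (G : SimpleGraph V) : ℕ :=
  haveI : Fintype ↥G.edgeSet := Fintype.ofFinite _
  ∑ e : ↥G.edgeSet,
    Sym2.lift ⟨fun u v => (gdeg G u + gdeg G v) ^ 2,
      fun u v => by dsimp only; rw [add_comm]⟩ (e : Sym2 V)

/-- The redefined Zagreb index:
`ReZM(G) = ∑_{uv ∈ E(G)} d_G(u) d_G(v) (d_G(u) + d_G(v))`. -/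
noncomputable def ReZM {V : Type*} [Finite V] (G : SimpleGraph V) : ℕ :=
  haveI : Fintype ↥G.edgeSet := Fintype.ofFinite _
  ∑ e : ↥G.edgeSet,
    Sym2.lift ⟨fun u v => gdeg G u * gdeg G v * (gdeg G u + gdeg G v),
      fun u v => by dsimp only; ring⟩ (e : Sym2 V)

/-- The number of edges of `G`. -/
noncomputable def numEdges {V : Type*} (G : SimpleGraph V) : ℕ :=
  Nat.card ↥G.edgeSet

/-! In `G₁ ∨̇_S G₂` a vertex `v` of `G₁` is adjacent to the `d_{G₁}(v)` subdivision vertices of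
its edges and to all of `G₂`, every subdivision vertex has degree 2, and a vertex `b` of `G₂` has
degree `d_{G₂}(b) + |V(G₁)|`. For `C_n` (2-regular with `n` edges) and `P_m` (two ends of degree 1,
`m - 2` inner vertices of degree 2) this gives
`F = n(m+2)³ + 8n + 2(n+1)³ + (m-2)(n+2)³`, which expands to the stated polynomial. -/

open Finset SimpleGraph

theorem gdeg_eq_natCard_neighborSet {V : Type*} [Finite V] (G : SimpleGraph V) (v : V) :
    gdeg G v = Nat.card (G.neighborSet v) := by
  have := Fintype.ofFinite (G.neighborSet v)
  unfold gdeg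
  rw [← card_neighborSet_eq_degree, Nat.card_eq_fintype_card]
  congr!

theorem gdeg_eq_card_of_mem_iff {V : Type*} [Fintype V] {G : SimpleGraph V} {v : V}
    {s : Finset V} (h : ∀ w, w ∈ s ↔ G.Adj v w) : gdeg G v = #s := by
  rw [gdeg_eq_natCard_neighborSet, ← Nat.card_eq_finsetCard]
  exact Nat.card_congr (Equiv.setCongr (Set.ext fun w => (h w).symm))

theorem Findex_eq_sum {V : Type*} [Fintype V] (G : SimpleGraph V) :
    Findex G = ∑ v, gdeg G v ^ 3 := by
  unfold Findex
  congr!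

section joinOn

variable {A B : Type*} [Fintype A] [Fintype B] (H : SimpleGraph A) (K : SimpleGraph B)
  (P : A → Prop) [DecidablePred P]

theorem gdeg_joinOn_inl (a : A) :
    gdeg (joinOn H K P) (Sum.inl a) = gdeg H a + if P a then Fintype.card B else 0 := by
  classical
  rw [gdeg_eq_card_of_mem_iff
      (s := ({w | H.Adj a w} : Finset A).disjSum (if P a then univ else ∅)), card_disjSum, gdeg_eq_card_of_mem_iff (s := {w | H.Adj a w})]
  · split_ifs <;> simp
  · simp
  · rintro (w | b) <;> split_ifs <;> simp [joinOn, *]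

theorem gdeg_joinOn_inr (b : B) :
    gdeg (joinOn H K P) (Sum.inr b) = gdeg K b + #{a | P a} := by
  classical
  rw [gdeg_eq_card_of_mem_iff (s := ({a | P a} : Finset A).disjSum {w | K.Adj b w}),
    card_disjSum, gdeg_eq_card_of_mem_iff (s := {w | K.Adj b w}), add_comm]
  · simp
  · rintro (a | w) <;> simp [joinOn]

end joinOn

section Sgraph

variable {V : Type*} [Fintype V] (G : SimpleGraph V)

theorem gdeg_Sgraph_inl (v : V) : gdeg (Sgraph G) (Sum.inl v) = gdeg G v := by
  classical
  have : Fintype G.edgeSet := Fintype.ofFinite _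
  rw [gdeg_eq_card_of_mem_iff (s := (∅ : Finset V).disjSum {e : G.edgeSet | v ∈ (e : Sym2 V)}),
    card_disjSum, card_empty, zero_add, ← Fintype.card_subtype, ← Nat.card_eq_fintype_card,
    gdeg_eq_natCard_neighborSet,
    ← Nat.card_congr (G.incidenceSetEquivNeighborSet v)]
  · exact Nat.card_congr (Equiv.subtypeSubtypeEquivSubtypeInter (· ∈ G.edgeSet) (v ∈ ·))
  · rintro (w | e) <;> simp [Sgraph]

theorem gdeg_Sgraph_inr (e : G.edgeSet) : gdeg (Sgraph G) (Sum.inr e) = 2 := by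
  classical
  have : Fintype G.edgeSet := Fintype.ofFinite _
  obtain ⟨e, he⟩ := e
  induction e using Sym2.ind with
  | _ a b =>
    rw [gdeg_eq_card_of_mem_iff (s := ({a, b} : Finset V).disjSum ∅), card_disjSum,
      card_pair (G.ne_of_adj he)]
    · rfl
    · rintro (w | f) <;> simp [Sgraph]

end Sgraph

section vertexSJoin

variable {V₁ V₂ : Type*} [Fintype V₁] [Fintype V₂] (G₁ : SimpleGraph V₁) (G₂ : SimpleGraph V₂)

theorem gdeg_vertexSJoin_inl_inl (v : V₁) :
    gdeg (vertexSJoin G₁ G₂) (Sum.inl (Sum.inl v)) = gdeg G₁ v + Fintype.card V₂ := by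
  have : Fintype G₁.edgeSet := Fintype.ofFinite _
  rw [vertexSJoin, gdeg_joinOn_inl, gdeg_Sgraph_inl]
  rfl

theorem gdeg_vertexSJoin_inl_inr (e : G₁.edgeSet) :
    gdeg (vertexSJoin G₁ G₂) (Sum.inl (Sum.inr e)) = 2 := by
  have : Fintype G₁.edgeSet := Fintype.ofFinite _
  rw [vertexSJoin, gdeg_joinOn_inl, gdeg_Sgraph_inr]
  rfl

theorem gdeg_vertexSJoin_inr (b : V₂) :
    gdeg (vertexSJoin G₁ G₂) (Sum.inr b) = gdeg G₂ b + Fintype.card V₁ := by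
  have : Fintype G₁.edgeSet := Fintype.ofFinite _
  rw [vertexSJoin, gdeg_joinOn_inr, card_filter, Fintype.sum_sum_type]
  simp

theorem Findex_vertexSJoin :
    Findex (vertexSJoin G₁ G₂) = ∑ v, (gdeg G₁ v + Fintype.card V₂) ^ 3 + 8 * numEdges G₁ +
      ∑ b, (gdeg G₂ b + Fintype.card V₁) ^ 3 := by
  have : Fintype G₁.edgeSet := Fintype.ofFinite _
  simp only [Findex_eq_sum, Fintype.sum_sum_type, gdeg_vertexSJoin_inl_inl,
    gdeg_vertexSJoin_inl_inr, gdeg_vertexSJoin_inr, numEdges, Nat.card_eq_fintype_card]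
  simp [mul_comm]

end vertexSJoin

theorem gdeg_cycleGraph {n : ℕ} (hn : 3 ≤ n) (v : Fin n) : gdeg (cycleGraph n) v = 2 := by
  obtain ⟨k, rfl⟩ := Nat.exists_eq_add_of_le' hn
  rw [gdeg_eq_natCard_neighborSet, Nat.card_eq_fintype_card, card_neighborSet_eq_degree,
    cycleGraph_degree_three_le]

theorem numEdges_cycleGraph {n : ℕ} (hn : 3 ≤ n) : numEdges (cycleGraph n) = n := by
  obtain ⟨k, rfl⟩ := Nat.exists_eq_add_of_le' hn
  have h := sum_degrees_eq_twice_card_edges (cycleGraph (k + 3))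
  simp only [cycleGraph_degree_three_le, sum_const, card_univ, Fintype.card_fin,
    smul_eq_mul] at h
  rw [numEdges, Nat.card_eq_fintype_card, ← edgeFinset_card]
  omega

section pathGraph

variable (k : ℕ)

theorem gdeg_pathGraph_zero : gdeg (pathGraph (k + 2)) 0 = 1 := by
  rw [gdeg_eq_card_of_mem_iff (s := {1}), card_singleton]
  intro w
  simp only [mem_singleton, pathGraph_adj, Fin.ext_iff, Fin.val_zero, Fin.val_one]
  omega

theorem gdeg_pathGraph_last : gdeg (pathGraph (k + 2)) (Fin.last (k + 1)) = 1 := by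
  rw [gdeg_eq_card_of_mem_iff (s := {(Fin.last k).castSucc}), card_singleton]
  intro w
  simp only [mem_singleton, pathGraph_adj, Fin.ext_iff, Fin.val_last, Fin.val_castSucc]
  omega

theorem gdeg_pathGraph_castSucc_succ (i : Fin k) :
    gdeg (pathGraph (k + 2)) i.castSucc.succ = 2 := by
  rw [gdeg_eq_card_of_mem_iff (s := {i.castSucc.castSucc, i.succ.succ}),
    card_pair (by simp [Fin.ext_iff]; omega)]
  intro w
  simp only [mem_insert, mem_singleton, pathGraph_adj, Fin.ext_iff, Fin.val_castSucc,
    Fin.val_succ, Nat.add_right_cancel_iff]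
  omega

theorem sum_pathGraph_gdeg {M : Type*} [AddCommMonoid M] (f : ℕ → M) :
    ∑ i, f (gdeg (pathGraph (k + 2)) i) = 2 • f 1 + k • f 2 := by
  rw [Fin.sum_univ_succ, Fin.sum_univ_castSucc, Fin.succ_last, gdeg_pathGraph_zero,
    gdeg_pathGraph_last]
  simp only [gdeg_pathGraph_castSucc_succ, sum_const, card_univ, Fintype.card_fin]
  abel

end pathGraph

theorem Findex_vertexSJoin_ex10 (n m : ℕ) (hn : 3 ≤ n) (hm : 2 ≤ m) :
    (Findex (vertexSJoin (SimpleGraph.cycleGraph n) (SimpleGraph.pathGraph m)) : ℤ) =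
      (m : ℤ) * (n : ℤ) * (((m : ℤ) ^ 2 + (n : ℤ) ^ 2) + 6 * ((m : ℤ) + (n : ℤ))) - 6 * (n : ℤ) ^ 2 + 24 * (m : ℤ) * (n : ℤ) + 8 * (m : ℤ) - 2 * (n : ℤ) - 14 := by
  obtain ⟨k, rfl⟩ := Nat.exists_eq_add_of_le' hm
  rw [Findex_vertexSJoin, sum_pathGraph_gdeg k (fun d => (d + Fintype.card (Fin n)) ^ 3),
    numEdges_cycleGraph hn]
  simp only [gdeg_cycleGraph hn, Fintype.card_fin, sum_const, card_univ, smul_eq_mul]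
  push_cast
  ring
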